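/- arXiv:1411.5647 — 3 statements merged into one kernel-verified Lean document; each statement's English description precedes it below -/
import Mathlib

section
/- Let u,v ∈ C* and consider the upper-triangular matrices X = [[u, 0],[0, u⁻¹]], Y = [[±1, 0],[1, ±1]] in SL(2,C) with u ≠ 0, ±1. Then X and Y satisfy the Whitehead link relation Y X Y⁻¹ X⁻¹ Y X⁻¹ Y⁻¹ X = X Y⁻¹ X⁻¹ Y X⁻¹ Y⁻¹ X Y. -/
/-!
Both sides of the relation regroup as `y P y Q` and `P y Q y` with `P = x y⁻¹ x⁻¹` and
`Q = x⁻¹ y⁻¹ x`, so the relation holds as soon as `y` commutes with `P` and `Q`. Here every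
factor `Y`, `Yi` lies in the commutative ring of matrices `!![e, 0; c, e]`, and sandwiching
such a matrix between `diag(u, v)` and `diag(v, u)` stays in that ring.
-/

theorem whitehead_relation_of_commute {M : Type*} [Monoid M] {x y x' y' : M}
    (hP : Commute y (x * y' * x')) (hQ : Commute y (x' * y' * x)) :
    y * x * y' * x' * y * x' * y' * x = x * y' * x' * y * x' * y' * x * y := by
  calc y * x * y' * x' * y * x' * y' * x = y * (x * y' * x') * (y * (x' * y' * x)) := by
        simp only [mul_assoc]
    _ = x * y' * x' * y * ((x' * y' * x) * y) := by rw [hP.eq, hQ.eq]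
    _ = x * y' * x' * y * x' * y' * x * y := by simp only [mul_assoc]

namespace Matrix

variable {R : Type*} [CommRing R]

theorem commute_fin_two_lower_scalar (a b c d : R) :
    Commute !![a, 0; c, a] !![b, 0; d, b] := by
  simp only [Commute, SemiconjBy, mul_fin_two, mul_zero, zero_mul, add_zero, zero_add]
  ring_nf

theorem diag_mul_lower_scalar_mul_diag_swap (u v e c : R) :
    !![u, 0; 0, v] * !![e, 0; c, e] * !![v, 0; 0, u] = !![u * v * e, 0; v * v * c, u * v * e] := by
  simp only [mul_fin_two, mul_zero, zero_mul, add_zero, zero_add]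
  ring_nf

end Matrix

theorem whitehead_relation_reducible_nonabelian_general (u ε : ℂ) :
    let X : Matrix (Fin 2) (Fin 2) ℂ := !![u, 0; 0, u⁻¹]
    let Y : Matrix (Fin 2) (Fin 2) ℂ := !![ε, 0; 1, ε]
    let Xi : Matrix (Fin 2) (Fin 2) ℂ := !![u⁻¹, 0; 0, u]
    let Yi : Matrix (Fin 2) (Fin 2) ℂ := !![ε, 0; -1, ε]
    Y * X * Yi * Xi * Y * Xi * Yi * X = X * Yi * Xi * Y * Xi * Yi * X * Y := by
  intro X Y Xi Yi
  apply whitehead_relation_of_commute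
  · rw [Matrix.diag_mul_lower_scalar_mul_diag_swap]
    exact Matrix.commute_fin_two_lower_scalar _ _ _ _
  · rw [Matrix.diag_mul_lower_scalar_mul_diag_swap]
    exact Matrix.commute_fin_two_lower_scalar _ _ _ _

/-- The matrices `X = diag(u, u⁻¹)` (with `u ≠ 0, ±1`) and `Y = [[±1, 0],[1, ±1]]` satisfy
the Whitehead link relation. -/
theorem whitehead_relation_reducible_nonabelian (u ε : ℂ) (hu : u ≠ 0)
    (hu1 : u ≠ 1) (hu2 : u ≠ -1) (hε : ε = 1 ∨ ε = -1) :
    let X : Matrix (Fin 2) (Fin 2) ℂ := !![u, 0; 0, u⁻¹]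
    let Y : Matrix (Fin 2) (Fin 2) ℂ := !![ε, 0; 1, ε]
    let Xi : Matrix (Fin 2) (Fin 2) ℂ := !![u⁻¹, 0; 0, u]
    let Yi : Matrix (Fin 2) (Fin 2) ℂ := !![ε, 0; -1, ε]
    Y * X * Yi * Xi * Y * Xi * Yi * X = X * Yi * Xi * Y * Xi * Yi * X * Y :=
  whitehead_relation_reducible_nonabelian_general u ε
end

section
/- Let ρ: ⟨x,y | yxy⁻¹x⁻¹yx⁻¹y⁻¹x = xy⁻¹x⁻¹yx⁻¹y⁻¹xy⟩ → SL(2,C) be an upper-triangular representation with ρ(x) = [[u, 0],[0, u⁻¹]] (u ≠ ±1, after conjugating off the upper-right entry) and ρ(y) = [[v, 1],[0, v⁻¹]]. Then the defining relation holds if and only if v = ±1. -/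
/-!
Every matrix involved is upper triangular, and both sides of the relation have exponent sum zero
in `x` and in `y`, so both are unipotent and the relation reduces to their upper-right entries.
These are `-v (u - u⁻¹)²` and `-v⁻¹ (u - u⁻¹)²`, which agree exactly when `v = v⁻¹`.
-/

namespace Whitehead

variable {K : Type*} [Field K]

def upperTri (a b : K) : Matrix (Fin 2) (Fin 2) K := !![a, b; 0, a⁻¹]

theorem upperTri_mul (a b a' b' : K) :
    upperTri a b * upperTri a' b' = upperTri (a * a') (a * b' + b * a'⁻¹) := by
  simp [upperTri, mul_comm]

theorem upperTri_inj {a b a' b' : K} : upperTri a b = upperTri a' b' ↔ a = a' ∧ b = b' := by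
  constructor
  · intro h
    exact ⟨congrFun (congrFun h 0) 0, congrFun (congrFun h 0) 1⟩
  · rintro ⟨rfl, rfl⟩
    rfl

variable {u v : K}

theorem whitehead_lhs_eq (hu : u ≠ 0) (hv : v ≠ 0) :
    upperTri v 1 * upperTri u 0 * upperTri v⁻¹ (-1) * upperTri u⁻¹ 0 * upperTri v 1 *
        upperTri u⁻¹ 0 * upperTri v⁻¹ (-1) * upperTri u 0 =
      upperTri 1 (-v * (u - u⁻¹) ^ 2) := by
  simp only [upperTri_mul, upperTri_inj]
  constructor
  · field_simp
  · field_simp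
    ring

theorem whitehead_rhs_eq (hu : u ≠ 0) (hv : v ≠ 0) :
    upperTri u 0 * upperTri v⁻¹ (-1) * upperTri u⁻¹ 0 * upperTri v 1 * upperTri u⁻¹ 0 *
        upperTri v⁻¹ (-1) * upperTri u 0 * upperTri v 1 =
      upperTri 1 (-v⁻¹ * (u - u⁻¹) ^ 2) := by
  simp only [upperTri_mul, upperTri_inj]
  constructor
  · field_simp
  · field_simp
    ring

theorem sub_inv_ne_zero (hu : u ≠ 0) (hu1 : u ≠ 1) (hu2 : u ≠ -1) : u - u⁻¹ ≠ 0 := by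
  rw [sub_ne_zero, ne_comm, Ne, inv_eq_self₀]
  tauto

end Whitehead

open Whitehead in
/-- For `ρ(x) = diag(u, u⁻¹)` with `u ≠ ±1` and `ρ(y) = [[v, 1],[0, v⁻¹]]`, the Whitehead
link relation holds if and only if `v = ±1`. -/
theorem whitehead_relation_upper_triangular_iff (u v : ℂ) (hu : u ≠ 0) (hv : v ≠ 0)
    (hu1 : u ≠ 1) (hu2 : u ≠ -1) :
    let X : Matrix (Fin 2) (Fin 2) ℂ := !![u, 0; 0, u⁻¹]
    let Y : Matrix (Fin 2) (Fin 2) ℂ := !![v, 1; 0, v⁻¹]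
    let Xi : Matrix (Fin 2) (Fin 2) ℂ := !![u⁻¹, 0; 0, u]
    let Yi : Matrix (Fin 2) (Fin 2) ℂ := !![v⁻¹, -1; 0, v]
    (Y * X * Yi * Xi * Y * Xi * Yi * X = X * Yi * Xi * Y * Xi * Yi * X * Y ↔
      (v = 1 ∨ v = -1)) := by
  intro X Y Xi Yi
  have hX : X = upperTri u 0 := rfl
  have hY : Y = upperTri v 1 := rfl
  have hXi : Xi = upperTri u⁻¹ 0 := by rw [upperTri, inv_inv]
  have hYi : Yi = upperTri v⁻¹ (-1) := by rw [upperTri, inv_inv]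
  have hc : (u - u⁻¹) ^ 2 ≠ 0 := pow_ne_zero 2 (sub_inv_ne_zero hu hu1 hu2)
  rw [hX, hY, hXi, hYi, whitehead_lhs_eq hu hv, whitehead_rhs_eq hu hv, upperTri_inj,
    and_iff_right rfl, mul_left_inj' hc, neg_inj, eq_comm (a := v), inv_eq_self₀]
  simp only [hv, false_or]
  tauto
end

section
/- The polynomial f(1,t,u,v) = u²v² t³ + uv(u²v² − 2u² − 2v² + 1) t² + (u⁴ + v⁴ − u²(v²−1)² − v²(u²−1)²) t + uv(u²−1)(v²−1), viewed as an element of C[t,u,v] (or of the coordinate ring of C × C* × C*), is irreducible. -/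
/-!
Over `R = ℂ[v][u]` write `f = u²v² t³ + uv b t² + c t + uv (u² - 1)(v² - 1)`. No prime divides both
`u²v²` and `c`, since `c` vanishes neither on `u = 0` nor on `v = 0`; so `f` is primitive, and by
Gauss's lemma it suffices that the cubic `f` has no root in `Frac R`. If `f(z) = 0` then `y = uvz`
is a root of the monic cubic `y³ + b y² + c y + d` with `d = u²v²(u² - 1)(v² - 1)`, so `y ∈ R`, `R`
being factorial. Comparing `u`-degrees gives `deg_u y ≤ 2`. At `u = ±1` the cubic becomes
`y (y² - (v² + 1) y + 2v²)`, whose quadratic factor has no root in `ℂ[v]` because its discriminant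
`v⁴ - 6v² + 1` is separable and hence not a square; so `y = s(v) (u² - 1)`. Evaluating at
`(u, v) = (0, 3)` and `(2, 3)` then leaves no possible value for `s(3)`.
-/

open Polynomial

namespace MvPolynomial
variable (R : Type*) [CommRing R]

noncomputable def finThreeEquiv : MvPolynomial (Fin 3) R ≃ₐ[R] R[X][X][X] :=
  (finSuccEquiv R 2).trans <| Polynomial.mapAlgEquiv <| (finSuccEquiv R 1).trans <|
    Polynomial.mapAlgEquiv <| (finSuccEquiv R 0).trans <| Polynomial.mapAlgEquiv <|
      isEmptyAlgEquiv R (Fin 0)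

variable {R}

theorem finThreeEquiv_X_zero : finThreeEquiv R (X 0) = Polynomial.X := by
  simp [finThreeEquiv, finSuccEquiv_X_zero]

theorem finThreeEquiv_X_one : finThreeEquiv R (X 1) = Polynomial.C Polynomial.X := by
  have h : finSuccEquiv R 2 (X 1) = Polynomial.C (X 0) := finSuccEquiv_X_succ (j := 0)
  simp [finThreeEquiv, h, finSuccEquiv_X_zero]

theorem finThreeEquiv_X_two :
    finThreeEquiv R (X 2) = Polynomial.C (Polynomial.C Polynomial.X) := by
  have h₂ : finSuccEquiv R 2 (X 2) = Polynomial.C (X 1) := finSuccEquiv_X_succ (j := 1)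
  have h₁ : finSuccEquiv R 1 (X 1) = Polynomial.C (X 0) := finSuccEquiv_X_succ (j := 0)
  simp [finThreeEquiv, h₂, h₁, finSuccEquiv_X_zero]

end MvPolynomial

namespace Polynomial

variable {K : Type*} [Field K] [NeZero (2 : K)]

theorem not_isSquare_X_pow_four_sub_six_mul_X_sq_add_one :
    ¬ IsSquare (X ^ 4 - 6 * X ^ 2 + 1 : K[X]) := by
  have h32 : (32 : K) ≠ 0 := by
    simpa [show (32 : K) = 2 ^ 5 by norm_num] using pow_ne_zero 5 (two_ne_zero (α := K))
  have hsep : (X ^ 4 - 6 * X ^ 2 + 1 : K[X]).Separable := by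
    have hbezout : (32 - 12 * X ^ 2) * (X ^ 4 - 6 * X ^ 2 + 1 : K[X])
        + (3 * X ^ 3 - 17 * X) * derivative (X ^ 4 - 6 * X ^ 2 + 1) = C 32 := by
      simp only [derivative_add, derivative_sub, derivative_X_pow, derivative_mul,
        derivative_ofNat, derivative_one, Nat.cast_ofNat, map_ofNat]
      ring
    refine ⟨C 32⁻¹ * (32 - 12 * X ^ 2), C 32⁻¹ * (3 * X ^ 3 - 17 * X), ?_⟩
    rw [mul_assoc, mul_assoc, ← mul_add, hbezout, ← C_mul, inv_mul_cancel₀ h32, C_1]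
  rintro ⟨w, hw⟩
  have hunit : IsUnit (X ^ 4 - 6 * X ^ 2 + 1 : K[X]) := by
    have hw_unit := hsep.squarefree w ⟨1, by rw [hw, mul_one]⟩
    exact hw ▸ hw_unit.mul hw_unit
  have hdeg : (X ^ 4 - 6 * X ^ 2 + 1 : K[X]).natDegree = 4 := by compute_degree!
  simp [natDegree_eq_zero_of_isUnit hunit] at hdeg

theorem eq_zero_of_mul_quadratic_eq_zero {e : K[X]}
    (h : e * (e ^ 2 - (X ^ 2 + 1) * e + 2 * X ^ 2) = 0) : e = 0 := by
  refine (mul_eq_zero.1 h).resolve_right fun hq ↦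
    not_isSquare_X_pow_four_sub_six_mul_X_sq_add_one ⟨2 * e - (X ^ 2 + 1), ?_⟩
  linear_combination -4 * hq

theorem natDegree_le_of_cubic_eq_zero {R : Type*} [CommRing R] [IsDomain R] {b c d r : R[X]}
    {m : ℕ} (hb : b.natDegree ≤ m) (hc : c.natDegree ≤ 2 * m) (hd : d.natDegree ≤ 3 * m)
    (hr : r ^ 3 + b * r ^ 2 + c * r + d = 0) : r.natDegree ≤ m := by
  by_contra! hm
  set n := r.natDegree
  have hrest : (b * r ^ 2 + c * r + d).natDegree ≤ m + 2 * n := by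
    have hbr := (natDegree_mul_le (p := b) (q := r ^ 2)).trans
      (add_le_add hb (natDegree_pow_le (p := r) (n := 2)))
    have hcr := (natDegree_mul_le (p := c) (q := r)).trans (Nat.add_le_add_right hc n)
    refine natDegree_add_le_of_degree_le (natDegree_add_le_of_degree_le ?_ ?_) ?_ <;> omega
  have hcube : (r ^ 3).natDegree = 3 * n := by rw [natDegree_pow, mul_comm]
  rw [show r ^ 3 = -(b * r ^ 2 + c * r + d) by linear_combination hr, natDegree_neg] at hcube
  omega

theorem eq_C_mul_X_sq_sub_one {R : Type*} [CommRing R] [IsDomain R] [NeZero (2 : R)] {p : R[X]}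
    (hp : p.natDegree ≤ 2) (h1 : p.eval 1 = 0) (hm1 : p.eval (-1) = 0) :
    p = C (p.coeff 2) * (X ^ 2 - 1) := by
  have hp' := eq_quadratic_of_degree_le_two (natDegree_le_iff_degree_le.1 hp)
  rw [hp'] at h1 hm1
  simp only [eval_add, eval_mul, eval_C, eval_pow, eval_X] at h1 hm1
  have hb : p.coeff 1 = 0 := by
    have : 2 * p.coeff 1 = 0 := by linear_combination h1 - hm1
    exact (mul_eq_zero.1 this).resolve_left two_ne_zero
  have hc : p.coeff 0 = - p.coeff 2 := by linear_combination h1 - hb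
  conv_lhs => rw [hp', hb, hc]
  rw [map_neg, map_zero]
  ring

theorem not_dvd_of_evalEval {R : Type*} [CommRing R] {p q : R[X][X]} {x y : R}
    (hp : p.evalEval x y = 0) (hq : q.evalEval x y ≠ 0) : ¬ p ∣ q := fun h ↦
  hq (zero_dvd_iff.1 (hp ▸ _root_.map_dvd (evalEvalRingHom x y) h))

end Polynomial

namespace WhiteheadChart

/-! `ℂ[X][X]` is `ℂ[v][u]`: `u = X`, `v = C X`; the outermost variable of `ℂ[X][X][X]` is `t`. -/

noncomputable def b : ℂ[X][X] := X ^ 2 * C X ^ 2 - 2 * X ^ 2 - 2 * C X ^ 2 + 1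

noncomputable def c : ℂ[X][X] :=
  X ^ 4 + C X ^ 4 - X ^ 2 * (C X ^ 2 - 1) ^ 2 - C X ^ 2 * (X ^ 2 - 1) ^ 2

noncomputable def d : ℂ[X][X] := X ^ 2 * C X ^ 2 * (X ^ 2 - 1) * (C X ^ 2 - 1)

theorem eval_eq_zero_of_sq_eq_one {r : ℂ[X][X]} (hr : r ^ 3 + b * r ^ 2 + c * r + d = 0)
    {a : ℂ[X]} (ha : a ^ 2 = 1) : r.eval a = 0 := by
  have h := congrArg (eval a) hr
  simp only [b, c, d, eval_add, eval_sub, eval_mul, eval_pow, eval_X, eval_C, eval_one,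
    eval_ofNat, eval_zero] at h
  set e := r.eval a
  refine eq_zero_of_mul_quadratic_eq_zero ?_
  linear_combination h - ((X ^ 2 - 2) * e ^ 2 + ((a ^ 2 + 1) - (X ^ 2 - 1) ^ 2
    - X ^ 2 * (a ^ 2 - 1)) * e + a ^ 2 * X ^ 2 * (X ^ 2 - 1)) * ha

theorem cubic_ne_zero (r : ℂ[X][X]) : r ^ 3 + b * r ^ 2 + c * r + d ≠ 0 := by
  intro hr
  have hdeg : r.natDegree ≤ 2 := by
    refine natDegree_le_of_cubic_eq_zero ?_ ?_ ?_ hr <;> simp only [b, c, d] <;> compute_degree!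
  have hr_eq := eq_C_mul_X_sq_sub_one hdeg (eval_eq_zero_of_sq_eq_one hr (one_pow 2))
    (eval_eq_zero_of_sq_eq_one hr (by ring))
  have h0 := congrArg (evalEval 3 0) hr
  have h2 := congrArg (evalEval 3 2) hr
  rw [hr_eq] at h0 h2
  simp only [b, c, d, evalEval, eval_add, eval_sub, eval_mul, eval_pow, eval_X, eval_C, eval_one,
    eval_ofNat, eval_zero] at h0 h2
  -- `r(0, 3) = -s` is a root of `y (y - 8) (y - 9)` and `r(2, 3) = 3 s` one of
  -- `y³ + 11 y² - 240 y + 864`.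
  generalize (r.coeff 2).eval 3 = s at h0 h2
  obtain hs | hs | hs : s = 0 ∨ s = -8 ∨ s = -9 := by
    have : s * (s + 8) * (s + 9) = 0 := by linear_combination -h0
    simp only [mul_eq_zero, add_eq_zero_iff_eq_neg] at this
    tauto
  all_goals rw [hs] at h2; norm_num at h2

noncomputable def chartPoly : ℂ[X][X][X] :=
  C (X ^ 2 * C X ^ 2) * X ^ 3 + C (X * C X * b) * X ^ 2 + C c * X
    + C (X * C X * (X ^ 2 - 1) * (C X ^ 2 - 1))

theorem chartPoly_isPrimitive : chartPoly.IsPrimitive := by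
  have hu : IsRelPrime (X : ℂ[X][X]) c := irreducible_X.isRelPrime_iff_not_dvd.2 <|
    not_dvd_of_evalEval (x := 2) (y := 0) (by simp) (by simp [c, evalEval]; norm_num)
  have hv : IsRelPrime (C X : ℂ[X][X]) c :=
    (prime_C_iff.2 prime_X).irreducible.isRelPrime_iff_not_dvd.2 <|
      not_dvd_of_evalEval (x := 0) (y := 2) (by simp [evalEval]) (by simp [c, evalEval]; norm_num)
  intro ρ hρ
  rw [C_dvd_iff_dvd_coeff] at hρ
  have hcop : IsRelPrime (X ^ 2 * C X ^ 2 : ℂ[X][X]) c := hu.pow_left.mul_left hv.pow_left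
  refine hcop ?_ ?_
  · simpa [chartPoly, coeff_X, coeff_C, -map_mul, -map_pow, -map_sub] using hρ 3
  · simpa [chartPoly, coeff_X, coeff_C, -map_mul, -map_pow, -map_sub] using hρ 1

theorem chartPoly_natDegree : chartPoly.natDegree = 3 := by
  unfold chartPoly
  compute_degree!

variable {K : Type*} [Field K] [Algebra ℂ[X][X] K] [IsFractionRing ℂ[X][X] K]

theorem chartPoly_map_not_isRoot (z : K) : ¬ (chartPoly.map (algebraMap ℂ[X][X] K)).IsRoot z := by
  intro hz
  have hg : (X ^ 3 + C b * X ^ 2 + C c * X + C d : ℂ[X][X][X]).Monic := by monicity!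
  have hy : aeval (algebraMap ℂ[X][X] K (X * C X) * z)
      (X ^ 3 + C b * X ^ 2 + C c * X + C d : ℂ[X][X][X]) = 0 := by
    simp only [IsRoot, chartPoly, eval_map, eval₂_add, eval₂_mul, eval₂_C, eval₂_X_pow,
      eval₂_X] at hz
    simp only [b, c, d, map_add, map_sub, map_mul, map_pow, map_one, map_ofNat,
      aeval_X, aeval_C] at hz ⊢
    linear_combination (algebraMap ℂ[X][X] K X * algebraMap ℂ[X][X] K (C X)) * hz
  obtain ⟨r, hr, -⟩ := exists_integer_of_is_root_of_monic hg hy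
  rw [hr, aeval_algebraMap_apply_eq_algebraMap_eval,
    map_eq_zero_iff _ (FaithfulSMul.algebraMap_injective _ _)] at hy
  refine cubic_ne_zero r ?_
  simpa using hy

theorem chartPoly_irreducible : Irreducible chartPoly := by
  rw [chartPoly_isPrimitive.irreducible_iff_irreducible_map_fraction_map
    (K := FractionRing ℂ[X][X])]
  refine irreducible_of_degree_le_three_of_not_isRoot ?_ chartPoly_map_not_isRoot
  rw [natDegree_map_eq_of_injective (FaithfulSMul.algebraMap_injective _ _), chartPoly_natDegree]
  decide

end WhiteheadChart

/-- The polynomial `f(1,t,u,v)` defining the chart `U₁` of the component `X₁` of the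
SL(2,ℂ) character variety of the Whitehead link complement is irreducible in `ℂ[t,u,v]`. -/
theorem chart_polynomial_irreducible :
    Irreducible
      (let T : MvPolynomial (Fin 3) ℂ := MvPolynomial.X 0
       let U : MvPolynomial (Fin 3) ℂ := MvPolynomial.X 1
       let V : MvPolynomial (Fin 3) ℂ := MvPolynomial.X 2
       U ^ 2 * V ^ 2 * T ^ 3
         + U * V * (U ^ 2 * V ^ 2 - 2 * U ^ 2 - 2 * V ^ 2 + 1) * T ^ 2
         + (U ^ 4 + V ^ 4 - U ^ 2 * (V ^ 2 - 1) ^ 2 - V ^ 2 * (U ^ 2 - 1) ^ 2) * T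
         + U * V * (U ^ 2 - 1) * (V ^ 2 - 1)) := by
  refine (MulEquiv.irreducible_iff (MvPolynomial.finThreeEquiv ℂ)).1 ?_
  convert WhiteheadChart.chartPoly_irreducible using 1
  simp only [map_add, map_sub, map_mul, map_pow, map_one, map_ofNat,
    MvPolynomial.finThreeEquiv_X_zero, MvPolynomial.finThreeEquiv_X_one,
    MvPolynomial.finThreeEquiv_X_two, WhiteheadChart.chartPoly, WhiteheadChart.b,
    WhiteheadChart.c]
end
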